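/- Let a > 0, let b ∈ ℝ^n be a row vector, let m ∈ O(h), and let x ∈ ℝ^n with D_{a,b,m}(x) ≠ 0. Then the matrix p(a,b,m) applied to the column vector (1, x, −½|x|²) equals D_{a,b,m}(x) times the column vector (1, φ_{a,b,m}(x), −½|φ_{a,b,m}(x)|²), where |y|² = yᵀ h y. That is, the linear action of p(a,b,m) on the null cone corresponds, in the affine chart x ↦ [(1, x, −½|x|²)], to the conformal transformation φ_{a,b,m}. -/

import Mathlib

open Matrix

noncomputable section

abbrev Idx (p q : ℕ) : Type := Unit ⊕ (Fin (p + q)) ⊕ Unit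

/-- The diagonal quadratic form of signature `(p,q)` on `ℝ^n`, `n = p + q`. -/
def hMat (p q : ℕ) : Matrix (Fin (p + q)) (Fin (p + q)) ℝ :=
  Matrix.diagonal fun i => if (i : ℕ) < p then (1 : ℝ) else -1

/-- The quadratic form of signature `(p+1,q+1)` on `ℝ^{n+2}`, in block form
`[[0,0,1],[0,h,0],[1,0,0]]`. -/
def htMat (p q : ℕ) : Matrix (Idx p q) (Idx p q) ℝ :=
  Matrix.of fun I J =>
    match I, J with
    | Sum.inl _, Sum.inr (Sum.inr _) => (1 : ℝ)
    | Sum.inr (Sum.inr _), Sum.inl _ => 1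
    | Sum.inr (Sum.inl i), Sum.inr (Sum.inl j) => hMat p q i j
    | _, _ => 0

/-- The first standard basis vector `e₀` of `ℝ^{n+2}`. -/
def e0 (p q : ℕ) : Idx p q → ℝ := fun I =>
  match I with
  | Sum.inl _ => 1
  | _ => 0

/-- `c = -(2a)⁻¹ b h⁻¹ bᵀ`. -/
def cVal (p q : ℕ) (a : ℝ) (b : Fin (p + q) → ℝ) : ℝ :=
  -(2 * a)⁻¹ * (b ⬝ᵥ ((hMat p q)⁻¹ *ᵥ b))

/-- `d = -a⁻¹ m h⁻¹ bᵀ`. -/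
def dVec (p q : ℕ) (a : ℝ) (b : Fin (p + q) → ℝ)
    (m : Matrix (Fin (p + q)) (Fin (p + q)) ℝ) : Fin (p + q) → ℝ :=
  (-a⁻¹) • (m *ᵥ ((hMat p q)⁻¹ *ᵥ b))

/-- The element `p(a,b,m)` of the parabolic subgroup, in block form
`[[a,b,c],[0,m,d],[0,0,a⁻¹]]`. -/
def pMat (p q : ℕ) (a : ℝ) (b : Fin (p + q) → ℝ)
    (m : Matrix (Fin (p + q)) (Fin (p + q)) ℝ) : Matrix (Idx p q) (Idx p q) ℝ :=
  Matrix.of fun I J =>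
    match I, J with
    | Sum.inl _, Sum.inl _ => a
    | Sum.inl _, Sum.inr (Sum.inl j) => b j
    | Sum.inl _, Sum.inr (Sum.inr _) => cVal p q a b
    | Sum.inr (Sum.inl i), Sum.inr (Sum.inl j) => m i j
    | Sum.inr (Sum.inl i), Sum.inr (Sum.inr _) => dVec p q a b m i
    | Sum.inr (Sum.inr _), Sum.inr (Sum.inr _) => a⁻¹
    | _, _ => 0

/-- `|x|² = xᵀ h x`. -/
def normSq (p q : ℕ) (x : Fin (p + q) → ℝ) : ℝ := x ⬝ᵥ (hMat p q *ᵥ x)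

/-- The denominator `D(x) = a + b x - ½ c |x|²`. -/
def Dden (p q : ℕ) (a : ℝ) (b x : Fin (p + q) → ℝ) : ℝ :=
  a + b ⬝ᵥ x - (1 / 2) * cVal p q a b * normSq p q x

/-- The conformal transformation `φ(x) = (m x - ½|x|² d)/D(x)`. -/
def phiMap (p q : ℕ) (a : ℝ) (b : Fin (p + q) → ℝ)
    (m : Matrix (Fin (p + q)) (Fin (p + q)) ℝ) (x : Fin (p + q) → ℝ) :
    Fin (p + q) → ℝ :=
  (Dden p q a b x)⁻¹ • (m *ᵥ x - ((1 / 2) * normSq p q x) • dVec p q a b m)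

/-- The conformal factor `Ω(x) = D(x)⁻¹`. -/
def OmegaFn (p q : ℕ) (a : ℝ) (b : Fin (p + q) → ℝ) (x : Fin (p + q) → ℝ) : ℝ :=
  (Dden p q a b x)⁻¹

/-- Jacobian matrix of a map at a point: `J i j = ∂ⱼ φⁱ (x)`. -/
def jacobianAt (p q : ℕ) (φ : (Fin (p + q) → ℝ) → (Fin (p + q) → ℝ))
    (x : Fin (p + q) → ℝ) : Matrix (Fin (p + q)) (Fin (p + q)) ℝ :=
  Matrix.of fun i j => fderiv ℝ φ x (Pi.single j 1) i

/-- Row vector of partial derivatives of a scalar function at a point. -/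
def gradAt (p q : ℕ) (f : (Fin (p + q) → ℝ) → ℝ) (x : Fin (p + q) → ℝ) :
    Fin (p + q) → ℝ :=
  fun j => fderiv ℝ f x (Pi.single j 1)

/-- The inclusion `x ↦ (1, x, -½|x|²)` of `ℝⁿ` into the null cone. -/
def liftVec (p q : ℕ) (x : Fin (p + q) → ℝ) : Idx p q → ℝ :=
  Sum.elim (fun _ => (1 : ℝ)) (Sum.elim x (fun _ => -(1 / 2) * normSq p q x))

/-!
On `v = (1, x, -½|x|²)` the rows of `p(a,b,m)` give `D(x)`, the numerator `y = m x - ½|x|² d` of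
`φ(x)`, and `-½ a⁻¹ |x|²`. Since `m` preserves `h` and `h⁻¹ = h`, one has `⟨m x, d⟩ = -a⁻¹ b x` and
`|d|² = a⁻² b h bᵀ = -2 a⁻¹ c`, whence `|y|² = a⁻¹ |x|² D(x)`. So the last row is
`-½ a⁻¹ |x|² = -½ |y|² / D(x) = D(x) · (-½ |φ(x)|²)`.
-/

theorem Matrix.dotProduct_mulVec_mulVec_of_transpose_mul_mul_eq {n R : Type*} [Fintype n]
    [CommRing R] {η m : Matrix n n R} (hm : mᵀ * η * m = η) (u v : n → R) :
    m *ᵥ u ⬝ᵥ η *ᵥ (m *ᵥ v) = u ⬝ᵥ η *ᵥ v := by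
  rw [mulVec_mulVec, dotProduct_mulVec, ← vecMul_transpose, vecMul_vecMul, ← Matrix.mul_assoc, hm,
    ← dotProduct_mulVec]

section

variable (p q : ℕ)

theorem hMat_transpose : (hMat p q)ᵀ = hMat p q := by
  simp [hMat]

theorem hMat_mul_self : hMat p q * hMat p q = 1 := by
  rw [hMat, diagonal_mul_diagonal, ← diagonal_one]
  congr 1
  funext i
  split_ifs <;> norm_num

theorem inv_hMat : (hMat p q)⁻¹ = hMat p q :=
  inv_eq_right_inv (hMat_mul_self p q)

theorem dotProduct_hMat_comm (u v : Fin (p + q) → ℝ) :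
    u ⬝ᵥ hMat p q *ᵥ v = v ⬝ᵥ hMat p q *ᵥ u := by
  rw [dotProduct_mulVec, ← mulVec_transpose, hMat_transpose, dotProduct_comm]

theorem normSq_sub (u w : Fin (p + q) → ℝ) :
    normSq p q (u - w) = normSq p q u - 2 * (u ⬝ᵥ hMat p q *ᵥ w) + normSq p q w := by
  rw [normSq, normSq, normSq, mulVec_sub, dotProduct_sub, sub_dotProduct, sub_dotProduct,
    dotProduct_hMat_comm p q w u]
  ring

theorem normSq_smul (c : ℝ) (v : Fin (p + q) → ℝ) :
    normSq p q (c • v) = c ^ 2 * normSq p q v := by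
  simp only [normSq, mulVec_smul, dotProduct_smul, smul_dotProduct, smul_eq_mul]
  ring

def phiNum (a : ℝ) (b : Fin (p + q) → ℝ) (m : Matrix (Fin (p + q)) (Fin (p + q)) ℝ)
    (x : Fin (p + q) → ℝ) : Fin (p + q) → ℝ :=
  m *ᵥ x - ((1 / 2) * normSq p q x) • dVec p q a b m

theorem phiMap_eq_smul_phiNum (a : ℝ) (b : Fin (p + q) → ℝ)
    (m : Matrix (Fin (p + q)) (Fin (p + q)) ℝ) (x : Fin (p + q) → ℝ) :
    phiMap p q a b m x = (Dden p q a b x)⁻¹ • phiNum p q a b m x :=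
  rfl

theorem pMat_mulVec_liftVec (a : ℝ) (b : Fin (p + q) → ℝ)
    (m : Matrix (Fin (p + q)) (Fin (p + q)) ℝ) (x : Fin (p + q) → ℝ) :
    pMat p q a b m *ᵥ liftVec p q x
      = Sum.elim (fun _ => Dden p q a b x)
          (Sum.elim (phiNum p q a b m x) (fun _ => -(1 / 2) * (a⁻¹ * normSq p q x))) := by
  funext I
  rcases I with _ | i | _ <;>
    simp [mulVec, dotProduct, pMat, liftVec, Fintype.sum_sum_type, Dden, phiNum] <;> ring

theorem smul_liftVec_inv_smul {D : ℝ} (hD : D ≠ 0) (y : Fin (p + q) → ℝ) :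
    D • liftVec p q (D⁻¹ • y)
      = Sum.elim (fun _ => D) (Sum.elim y (fun _ => -(1 / 2) * (D⁻¹ * normSq p q y))) := by
  funext I
  rcases I with _ | i | _
  · simp [liftVec]
  · simp [liftVec, hD]
  · simp only [liftVec, Sum.elim_inr, Pi.smul_apply, smul_eq_mul, normSq_smul]
    field_simp

theorem normSq_phiNum {a : ℝ} (ha : a ≠ 0) (b : Fin (p + q) → ℝ)
    {m : Matrix (Fin (p + q)) (Fin (p + q)) ℝ} (hm : mᵀ * hMat p q * m = hMat p q)
    (x : Fin (p + q) → ℝ) :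
    normSq p q (phiNum p q a b m x) = a⁻¹ * normSq p q x * Dden p q a b x := by
  have hd : dVec p q a b m = (-a⁻¹) • (m *ᵥ (hMat p q *ᵥ b)) := by
    rw [dVec, inv_hMat]
  have hmx_d : m *ᵥ x ⬝ᵥ hMat p q *ᵥ dVec p q a b m = -a⁻¹ * (b ⬝ᵥ x) := by
    rw [hd, mulVec_smul, dotProduct_smul, dotProduct_mulVec_mulVec_of_transpose_mul_mul_eq hm,
      mulVec_mulVec, hMat_mul_self, one_mulVec, dotProduct_comm, smul_eq_mul]
  have hd_sq : normSq p q (dVec p q a b m) = a⁻¹ ^ 2 * (b ⬝ᵥ hMat p q *ᵥ b) := by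
    rw [hd, normSq_smul, normSq, dotProduct_mulVec_mulVec_of_transpose_mul_mul_eq hm,
      mulVec_mulVec, hMat_mul_self, one_mulVec, dotProduct_comm, neg_sq]
  have hmx_sq : normSq p q (m *ᵥ x) = normSq p q x :=
    dotProduct_mulVec_mulVec_of_transpose_mul_mul_eq hm x x
  rw [phiNum, normSq_sub, normSq_smul, mulVec_smul, dotProduct_smul, smul_eq_mul, hmx_d, hd_sq,
    hmx_sq, Dden, cVal, inv_hMat]
  field_simp
  ring

end

theorem statement4_general (p q : ℕ)
    (a : ℝ) (ha : 0 < a) (b : Fin (p + q) → ℝ)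
    (m : Matrix (Fin (p + q)) (Fin (p + q)) ℝ)
    (hm : mᵀ * hMat p q * m = hMat p q)
    (x : Fin (p + q) → ℝ) (hx : Dden p q a b x ≠ 0) :
    pMat p q a b m *ᵥ liftVec p q x
      = Dden p q a b x • liftVec p q (phiMap p q a b m x) := by
  rw [pMat_mulVec_liftVec, phiMap_eq_smul_phiNum, smul_liftVec_inv_smul p q hx,
    normSq_phiNum p q ha.ne' b hm]
  congr 3
  funext
  field_simp

/-- The linear action of `p(a,b,m)` on the null cone corresponds, in the affine
chart `x ↦ [(1, x, -½|x|²)]`, to the conformal transformation `φ_{a,b,m}`: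
`p(a,b,m) (1, x, -½|x|²) = D(x) (1, φ(x), -½|φ(x)|²)`. -/
theorem statement4 (p q : ℕ) (hn : 3 ≤ p + q)
    (a : ℝ) (ha : 0 < a) (b : Fin (p + q) → ℝ)
    (m : Matrix (Fin (p + q)) (Fin (p + q)) ℝ)
    (hm : mᵀ * hMat p q * m = hMat p q)
    (x : Fin (p + q) → ℝ) (hx : Dden p q a b x ≠ 0) :
    pMat p q a b m *ᵥ liftVec p q x
      = Dden p q a b x • liftVec p q (phiMap p q a b m x) :=
  statement4_general p q a ha b m hm x hx
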